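/- arXiv:1507.06053 — 2 statements merged into one kernel-verified Lean document; each statement's English description precedes it below -/
import Mathlib

section
/- Let (G, prec) be a simple preference system and let x be a half-integral point of the fractional stable matching polytope FSM(G, prec). Then the set E_{1/2}(x) of edges e with x(e) = 1/2 is a disjoint union of vertex-disjoint cycles, each of which has cyclic preferences. -/
attribute [local instance] Classical.propDecidable

/-- Edge `e` is incident to vertex `v` (multigraph given by endpoint maps `fst`, `snd`). -/
def Incid {V E : Type} (fst snd : E → V) (e : E) (v : V) : Prop :=
  fst e = v ∨ snd e = v

/-- Edge `e` joins the vertices `u` and `w`. -/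
def Joins {V E : Type} (fst snd : E → V) (e : E) (u w : V) : Prop :=
  (fst e = u ∧ snd e = w) ∨ (fst e = w ∧ snd e = u)

/-- In the preference system `(G, prec)`, edge `f` dominates edge `e`:
they share an endpoint `v` and `v` prefers `f` to `e`. -/
def Dominates {V E : Type} (fst snd : E → V) (prec : V → E → E → Prop) (f e : E) : Prop :=
  ∃ v, Incid fst snd e v ∧ Incid fst snd f v ∧ prec v f e

/-- `prec` is a preference system: for each vertex `v`, `prec v` is a strict linear order
on the set of edges incident to `v`. -/
def IsPrefOrder {V E : Type} (fst snd : E → V) (prec : V → E → E → Prop) : Prop :=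
  (∀ v e, ¬ prec v e e) ∧
  (∀ v e f g, prec v e f → prec v f g → prec v e g) ∧
  (∀ v e f, Incid fst snd e v → Incid fst snd f v → e ≠ f → prec v e f ∨ prec v f e)

/-- The graph `(V, E)` is simple: no loops and no parallel edges. -/
def SimpleG {V E : Type} (fst snd : E → V) : Prop :=
  (∀ e, fst e ≠ snd e) ∧
  (∀ e f, e ≠ f → ¬ ((fst e = fst f ∧ snd e = snd f) ∨ (fst e = snd f ∧ snd e = fst f)))

/-- The fractional stable matching polytope `FSM(G, prec)`:
`x ≥ 0`, `x(δ(v)) ≤ 1` for every vertex `v`, and `x(φ(e)) ≥ 1` for every edge `e`,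
where `φ(e)` consists of `e` together with all edges dominating `e`. -/
def FSMset {V E : Type} [Fintype V] [Fintype E] (fst snd : E → V)
    (prec : V → E → E → Prop) : Set (E → ℝ) :=
  {x | (∀ e, 0 ≤ x e) ∧
       (∀ v, ∑ e ∈ Finset.univ.filter (fun e => Incid fst snd e v), x e ≤ 1) ∧
       (∀ e, x e + ∑ f ∈ Finset.univ.filter
          (fun f => f ≠ e ∧ Dominates fst snd prec f e), x f ≥ 1)}

/-- `M` is a stable matching of the preference system: a matching such that every edge is
in `M` or dominated by an edge of `M`. -/
def IsStableMatching {V E : Type} (fst snd : E → V) (prec : V → E → E → Prop)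
    (M : Finset E) : Prop :=
  (∀ e ∈ M, ∀ f ∈ M, e ≠ f → ∀ v, ¬ (Incid fst snd e v ∧ Incid fst snd f v)) ∧
  (∀ e, e ∈ M ∨ ∃ f ∈ M, Dominates fst snd prec f e)

/-- The set of characteristic vectors of stable matchings. -/
def SMvecs {V E : Type} (fst snd : E → V) (prec : V → E → E → Prop) : Set (E → ℝ) :=
  {x | ∃ M : Finset E, IsStableMatching fst snd prec M ∧
        x = fun e => if e ∈ M then (1 : ℝ) else 0}

/-- The preference system admits no odd cycle with cyclic preferences. -/
def NoOddCyclicCycle {V E : Type} (fst snd : E → V) (prec : V → E → E → Prop) : Prop :=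
  ∀ n : ℕ, Odd n → ∀ (c : ZMod n → V) (g : ZMod n → E),
    Function.Injective c →
    (∀ i, Joins fst snd (g i) (c i) (c (i + 1))) →
    ¬ ((∀ i, prec (c (i + 1)) (g i) (g (i + 1))) ∨
       (∀ i, prec (c (i + 1)) (g (i + 1)) (g i)))

section MyAux
variable {V E : Type}

lemma joins_of_incid {fst snd : E → V} {e : E} {u w : V}
    (hu : Incid fst snd e u) (hw : Incid fst snd e w) (huw : u ≠ w) :
    Joins fst snd e u w := by
  rcases hu with h1 | h1 <;> rcases hw with h2 | h2
  · exact absurd (h1.symm.trans h2) huw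
  · exact Or.inl ⟨h1, h2⟩
  · exact Or.inr ⟨h2, h1⟩
  · exact absurd (h1.symm.trans h2) huw

lemma incid_unique {fst snd : E → V} {e : E} {u a b : V}
    (h : Incid fst snd e u) (ha : Incid fst snd e a) (hb : Incid fst snd e b)
    (hau : a ≠ u) (hbu : b ≠ u) : a = b := by
  rcases ha with h1 | h1 <;> rcases hb with h2 | h2 <;> rcases h with h3 | h3 <;>
    first
      | exact h1.symm.trans h2
      | exact absurd (h1.symm.trans h3) hau
      | exact absurd (h2.symm.trans h3) hbu

lemma not_parallel {fst snd : E → V} (hs : SimpleG fst snd) {e f : E} {u w : V}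
    (hef : e ≠ f) (h1 : Joins fst snd e u w) (h2 : Joins fst snd f u w) : False := by
  apply hs.2 e f hef
  rcases h1 with ⟨a1, a2⟩ | ⟨a1, a2⟩ <;> rcases h2 with ⟨b1, b2⟩ | ⟨b1, b2⟩
  · exact Or.inl ⟨a1.trans b1.symm, a2.trans b2.symm⟩
  · exact Or.inr ⟨a1.trans b2.symm, a2.trans b1.symm⟩
  · exact Or.inr ⟨a1.trans b2.symm, a2.trans b1.symm⟩
  · exact Or.inl ⟨a1.trans b1.symm, a2.trans b2.symm⟩

/-- `e` is dominated at `v` by some half-edge. -/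
def DomAt (fst snd : E → V) (prec : V → E → E → Prop) (x : E → ℝ) (v : V) (e : E) : Prop :=
  Incid fst snd e v ∧ ∃ f, x f = 1/2 ∧ f ≠ e ∧ Incid fst snd f v ∧ prec v f e

/-- The (unique) vertex at which half-edge `e` is dominated. -/
noncomputable def vd (fst snd : E → V) (prec : V → E → E → Prop) (x : E → ℝ) (e : E) : V :=
  if h : ∃ v, DomAt fst snd prec x v e then h.choose else fst e

/-- The successor half-edge: the half-edge dominating `e` at `vd e`. -/
noncomputable def nxe (fst snd : E → V) (prec : V → E → E → Prop) (x : E → ℝ) (e : E) : E :=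
  if h : x e = 1/2 ∧ ∃ f, x f = 1/2 ∧ f ≠ e ∧
      Incid fst snd f (vd fst snd prec x e) ∧ prec (vd fst snd prec x e) f e
  then h.2.choose else e

lemma vd_spec {fst snd : E → V} {prec : V → E → E → Prop} {x : E → ℝ} {e : E}
    (h : ∃ v, DomAt fst snd prec x v e) : DomAt fst snd prec x (vd fst snd prec x e) e := by
  rw [vd, dif_pos h]; exact h.choose_spec

lemma nxe_spec {fst snd : E → V} {prec : V → E → E → Prop} {x : E → ℝ} {e : E}
    (he : x e = 1/2) (h : ∃ v, DomAt fst snd prec x v e) :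
    x (nxe fst snd prec x e) = 1/2 ∧ nxe fst snd prec x e ≠ e ∧
      Incid fst snd (nxe fst snd prec x e) (vd fst snd prec x e) ∧
      prec (vd fst snd prec x e) (nxe fst snd prec x e) e := by
  have hc : x e = 1/2 ∧ ∃ f, x f = 1/2 ∧ f ≠ e ∧
      Incid fst snd f (vd fst snd prec x e) ∧ prec (vd fst snd prec x e) f e :=
    ⟨he, (vd_spec h).2⟩
  rw [nxe, dif_pos hc]
  exact hc.2.choose_spec

lemma nxe_of_not {fst snd : E → V} {prec : V → E → E → Prop} {x : E → ℝ} {e : E}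
    (he : x e ≠ 1/2) : nxe fst snd prec x e = e := by
  rw [nxe, dif_neg]; intro hc; exact he hc.1

end MyAux

/-- Abeledo–Rothblum: for a half-integral point `x` of `FSM(G, prec)` of a
simple preference system, the set `E_{1/2}(x)` of edges with `x e = 1/2` is a disjoint
union of vertex-disjoint cycles, each having cyclic preferences. -/
theorem stmt_7 {V E : Type} [Fintype V] [Fintype E] (fst snd : E → V)
    (prec : V → E → E → Prop) (hord : IsPrefOrder fst snd prec)
    (hsimple : SimpleG fst snd)
    (x : E → ℝ) (hx : x ∈ FSMset fst snd prec)
    (hhalf : ∀ e, x e = 0 ∨ x e = 1 / 2 ∨ x e = 1) :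
    ∃ (r : ℕ) (n : Fin r → ℕ) (cyc : ∀ k, ZMod (n k) → V) (edg : ∀ k, ZMod (n k) → E),
      (∀ k, 0 < n k) ∧
      (∀ k, Function.Injective (cyc k)) ∧
      (∀ k, Function.Injective (edg k)) ∧
      (∀ k i, Joins fst snd (edg k i) (cyc k i) (cyc k (i + 1))) ∧
      (∀ k l, k ≠ l → ∀ i j, cyc k i ≠ cyc l j) ∧
      (∀ k, (∀ i, prec (cyc k (i + 1)) (edg k i) (edg k (i + 1))) ∨
            (∀ i, prec (cyc k (i + 1)) (edg k (i + 1)) (edg k i))) ∧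
      {e | x e = 1 / 2} = ⋃ k, Set.range (edg k) := by
  classical
  obtain ⟨hx0, hxv, hxe⟩ := hx
  have hasym : ∀ v a b, prec v a b → prec v b a → False :=
    fun v a b h1 h2 => hord.1 v a (hord.2.1 v a b a h1 h2)
  set H : Finset E := Finset.univ.filter (fun e => x e = 1/2) with hH
  have hmemH : ∀ e, e ∈ H ↔ x e = 1/2 := by
    intro e; simp [hH]
  -- sums of x over incident edges are ≤ 1
  have hsub : ∀ (v : V) (S : Finset E), (∀ e ∈ S, Incid fst snd e v) → ∑ e ∈ S, x e ≤ 1 := by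
    intro v S hS
    refine le_trans (Finset.sum_le_sum_of_subset_of_nonneg ?_ ?_) (hxv v)
    · intro e he
      simp only [Finset.mem_filter, Finset.mem_univ, true_and]
      exact hS e he
    · intro e _ _
      exact hx0 e
  -- at most two half-edges at any vertex
  have hdeg2 : ∀ v, (H.filter (fun e => Incid fst snd e v)).card ≤ 2 := by
    intro v
    by_contra hc
    push_neg at hc
    obtain ⟨a, b, c, ha, hb, hcm, hab, hac, hbc⟩ := Finset.two_lt_card_iff.mp hc
    simp only [Finset.mem_filter, hmemH] at ha hb hcm
    have hsum := hsub v {a, b, c} ?_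
    · rw [Finset.sum_insert (by simp [hab, hac]),
        Finset.sum_insert (by simp [hbc]), Finset.sum_singleton,
        ha.1, hb.1, hcm.1] at hsum
      linarith
    · intro e he
      simp only [Finset.mem_insert, Finset.mem_singleton] at he
      rcases he with rfl | rfl | rfl
      · exact ha.2
      · exact hb.2
      · exact hcm.2
  -- a half edge and a full edge cannot share a vertex
  have hno1 : ∀ v e f, Incid fst snd e v → Incid fst snd f v → e ≠ f →
      x e = 1/2 → x f = 1 → False := by
    intro v e f hev hfv hef he hf
    have hsum := hsub v {e, f} ?_
    · rw [Finset.sum_insert (by simp [hef]), Finset.sum_singleton, he, hf] at hsum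
      linarith
    · intro g hg
      simp only [Finset.mem_insert, Finset.mem_singleton] at hg
      rcases hg with rfl | rfl
      · exact hev
      · exact hfv
  -- every half edge is dominated by some half edge
  have hdom : ∀ e, x e = 1/2 → ∃ v, DomAt fst snd prec x v e := by
    intro e he
    have h1 := hxe e
    have h2 : 0 < ∑ f ∈ Finset.univ.filter
        (fun f => f ≠ e ∧ Dominates fst snd prec f e), x f := by
      rw [ge_iff_le] at h1
      linarith
    have h3 : ∃ f ∈ Finset.univ.filter
        (fun f => f ≠ e ∧ Dominates fst snd prec f e), x f ≠ 0 := by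
      by_contra hcon
      push_neg at hcon
      rw [Finset.sum_eq_zero hcon] at h2
      exact lt_irrefl 0 h2
    obtain ⟨f, hfmem, hfne⟩ := h3
    simp only [Finset.mem_filter, Finset.mem_univ, true_and] at hfmem
    obtain ⟨hfe, v, hev, hfv, hp⟩ := hfmem
    rcases hhalf f with h | h | h
    · exact absurd h hfne
    · exact ⟨v, hev, f, h, hfe, hfv, hp⟩
    · exact absurd h (fun hh => hno1 v e f hev hfv (Ne.symm hfe) he hh)
  -- "other edge" uniqueness at a vertex
  have hOther : ∀ (v : V) (e f g : E), x e = 1/2 → x f = 1/2 → x g = 1/2 →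
      Incid fst snd e v → Incid fst snd f v → Incid fst snd g v →
      f ≠ e → g ≠ e → f = g := by
    intro v e f g he hf hg hev hfv hgv hfe hge
    by_contra hfg
    have h3 : 2 < (H.filter (fun e => Incid fst snd e v)).card := by
      apply Finset.two_lt_card_iff.mpr
      refine ⟨e, f, g, ?_, ?_, ?_, Ne.symm hfe, Ne.symm hge, hfg⟩ <;>
        simp only [Finset.mem_filter, hmemH]
      · exact ⟨he, hev⟩
      · exact ⟨hf, hfv⟩
      · exact ⟨hg, hgv⟩
    have := hdeg2 v
    omega
  -- counting: each half edge is dominated at exactly one vertex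
  have hDomUnique : ∀ e, x e = 1/2 → ∀ v v', DomAt fst snd prec x v e →
      DomAt fst snd prec x v' e → v = v' := by
    set d : V → ℕ := fun v => (H.filter (fun e => Incid fst snd e v)).card with hd
    set t : V → ℕ := fun v => (H.filter (fun e => DomAt fst snd prec x v e)).card with ht
    set w : E → ℕ := fun e =>
      (Finset.univ.filter (fun v => DomAt fst snd prec x v e)).card with hwdef
    have hend : ∀ e : E, (Finset.univ.filter (fun v => Incid fst snd e v)).card = 2 := by
      intro e
      have heq : Finset.univ.filter (fun v => Incid fst snd e v) = {fst e, snd e} := by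
        ext v
        simp [Incid, eq_comm]
      rw [heq, Finset.card_insert_of_notMem (by simp [hsimple.1 e]), Finset.card_singleton]
    have hhs : ∑ v, d v = 2 * H.card := by
      calc ∑ v, d v = ∑ v, ∑ e ∈ H, if Incid fst snd e v then 1 else 0 :=
            Finset.sum_congr rfl fun v _ => Finset.card_filter _ _
        _ = ∑ e ∈ H, ∑ v, if Incid fst snd e v then 1 else 0 := Finset.sum_comm
        _ = ∑ e ∈ H, (Finset.univ.filter (fun v => Incid fst snd e v)).card :=
            Finset.sum_congr rfl fun e _ => (Finset.card_filter _ _).symm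
        _ = ∑ e ∈ H, 2 := Finset.sum_congr rfl fun e _ => hend e
        _ = 2 * H.card := by rw [Finset.sum_const, smul_eq_mul, mul_comm]
    have hwt : ∑ e ∈ H, w e = ∑ v, t v := by
      calc ∑ e ∈ H, w e
          = ∑ e ∈ H, ∑ v, if DomAt fst snd prec x v e then 1 else 0 :=
            Finset.sum_congr rfl fun e _ => Finset.card_filter _ _
        _ = ∑ v, ∑ e ∈ H, if DomAt fst snd prec x v e then 1 else 0 := Finset.sum_comm
        _ = ∑ v, t v :=
            Finset.sum_congr rfl fun v _ => (Finset.card_filter _ _).symm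
    have ht1 : ∀ v, t v ≤ 1 := by
      intro v
      apply Finset.card_le_one.mpr
      intro a ha b hb
      simp only [Finset.mem_filter, hmemH] at ha hb
      obtain ⟨ha2, hai, f, hf2, hfa, hfv, hpf⟩ := ha
      obtain ⟨hb2, hbi, g, hg2, hgb, hgv, hpg⟩ := hb
      by_contra hab
      have hfb : f = b := hOther v a f b ha2 hf2 hb2 hai hfv hbi hfa (Ne.symm hab)
      have hga : g = a := hOther v b g a hb2 hg2 ha2 hbi hgv hai hgb hab
      exact hasym v b a (hfb ▸ hpf) (hga ▸ hpg)
    have ht2 : ∀ v, 2 * t v ≤ d v := by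
      intro v
      rcases Nat.le_one_iff_eq_zero_or_eq_one.mp (ht1 v) with h | h
      · rw [h]
        exact Nat.zero_le _
      · rw [h]
        have h' : (H.filter (fun e => DomAt fst snd prec x v e)).card = 1 := h
        have hpos : 0 < (H.filter (fun e => DomAt fst snd prec x v e)).card := by omega
        obtain ⟨a, ha⟩ := Finset.card_pos.mp hpos
        simp only [Finset.mem_filter, hmemH] at ha
        obtain ⟨ha2, hai, f, hf2, hfa, hfv, hpf⟩ := ha
        have hsubset : ({a, f} : Finset E) ⊆ H.filter (fun e => Incid fst snd e v) := by
          intro g hg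
          simp only [Finset.mem_insert, Finset.mem_singleton] at hg
          simp only [Finset.mem_filter, hmemH]
          rcases hg with rfl | rfl
          · exact ⟨ha2, hai⟩
          · exact ⟨hf2, hfv⟩
        have hcard2 : ({a, f} : Finset E).card = 2 := by
          rw [Finset.card_insert_of_notMem (by simp [Ne.symm hfa]), Finset.card_singleton]
        calc 2 * 1 = ({a, f} : Finset E).card := by rw [hcard2]
          _ ≤ d v := Finset.card_le_card hsubset
    have hw1 : ∀ e ∈ H, 1 ≤ w e := by
      intro e he
      obtain ⟨v, hv⟩ := hdom e ((hmemH e).mp he)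
      have hvmem : v ∈ Finset.univ.filter (fun v => DomAt fst snd prec x v e) := by
        simp only [Finset.mem_filter, Finset.mem_univ, true_and]
        exact hv
      exact Finset.card_pos.mpr ⟨v, hvmem⟩
    have hkey : ∀ e ∈ H, w e = 1 := by
      have hs1 : H.card ≤ ∑ e ∈ H, w e := by
        calc H.card = ∑ _e ∈ H, 1 := Finset.card_eq_sum_ones H
          _ ≤ ∑ e ∈ H, w e := Finset.sum_le_sum hw1
      have hs2 : 2 * ∑ v, t v ≤ ∑ v, d v := by
        rw [Finset.mul_sum]
        exact Finset.sum_le_sum fun v _ => ht2 v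
      have heq : ∑ e ∈ H, w e = H.card := by omega
      intro e he
      by_contra hne
      have hlt : ∑ _f ∈ H, 1 < ∑ f ∈ H, w f :=
        Finset.sum_lt_sum hw1 ⟨e, he, by have := hw1 e he; omega⟩
      rw [heq, ← Finset.card_eq_sum_ones] at hlt
      exact lt_irrefl _ hlt
    intro e he v v' hv hv'
    have hecard : (Finset.univ.filter (fun v => DomAt fst snd prec x v e)).card ≤ 1 :=
      le_of_eq (hkey e ((hmemH e).mpr he))
    exact Finset.card_le_one.mp hecard v
      (by simp only [Finset.mem_filter, Finset.mem_univ, true_and]; exact hv) v'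
      (by simp only [Finset.mem_filter, Finset.mem_univ, true_and]; exact hv')
  -- abbreviations
  set ve : E → V := vd fst snd prec x with hve
  set nx : E → E := nxe fst snd prec x with hnx
  have hveSpec : ∀ e, x e = 1/2 → DomAt fst snd prec x (ve e) e :=
    fun e he => vd_spec (hdom e he)
  have hnxSpec : ∀ e, x e = 1/2 → x (nx e) = 1/2 ∧ nx e ≠ e ∧
      Incid fst snd (nx e) (ve e) ∧ prec (ve e) (nx e) e :=
    fun e he => nxe_spec he (hdom e he)
  have hveU : ∀ e, x e = 1/2 → ∀ v, DomAt fst snd prec x v e → v = ve e :=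
    fun e he v hv => hDomUnique e he v (ve e) hv (hveSpec e he)
  -- P1 : successive dominated vertices differ
  have hveNe : ∀ e, x e = 1/2 → ve (nx e) ≠ ve e := by
    intro e he heq
    obtain ⟨hnx2, hnxe, hnxv, hnxp⟩ := hnxSpec e he
    obtain ⟨hv', g, hg2, hgnx, hgv', hpg⟩ := hveSpec (nx e) hnx2
    rw [heq] at hgv' hpg
    have hge : g = e := hOther (ve e) (nx e) g e hnx2 hg2 he hnxv hgv'
      (hveSpec e he).1 hgnx (Ne.symm hnxe)
    rw [hge] at hpg
    exact hasym (ve e) e (nx e) hpg hnxp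
  -- P2 : nx is injective on half edges
  have hnxInjH : ∀ e e', x e = 1/2 → x e' = 1/2 → nx e = nx e' → e = e' := by
    intro e e' he he' heq
    obtain ⟨hf2, hfe, hfv, hfp⟩ := hnxSpec e he
    obtain ⟨hf2', hfe', hfv', hfp'⟩ := hnxSpec e' he'
    have h1 : ve e ≠ ve (nx e) := fun h => hveNe e he h.symm
    have h2 : ve e' ≠ ve (nx e) := by
      intro h
      rw [heq] at h
      exact hveNe e' he' h.symm
    rw [← heq] at hfv'
    have hvv : ve e = ve e' :=
      incid_unique (hveSpec (nx e) hf2).1 hfv hfv' h1 h2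
    refine hOther (ve e) (nx e) e e' hf2 he he' hfv (hveSpec e he).1 ?_
      (Ne.symm hfe) ?_
    · rw [hvv]
      exact (hveSpec e' he').1
    · rw [← heq] at hfe'
      exact Ne.symm hfe'
  have hnxH12 : ∀ e, x e = 1/2 → x (nx e) = 1/2 := fun e he => (hnxSpec e he).1
  have hnxInj : Function.Injective nx := by
    intro a b hab
    by_cases ha : x a = 1/2 <;> by_cases hb : x b = 1/2
    · exact hnxInjH a b ha hb hab
    · exfalso
      apply hb
      rw [hnx] at hab
      rw [nxe_of_not hb] at hab
      rw [← hab]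
      exact hnxH12 a ha
    · exfalso
      apply ha
      rw [hnx] at hab
      rw [nxe_of_not ha] at hab
      rw [hab]
      exact hnxH12 b hb
    · rw [hnx] at hab
      rw [nxe_of_not ha, nxe_of_not hb] at hab
      exact hab
  have hitH : ∀ (e : E), x e = 1/2 → ∀ n : ℕ, x (nx^[n] e) = 1/2 := by
    intro e he n
    induction n with
    | zero => exact he
    | succ n ih =>
      rw [Function.iterate_succ_apply']
      exact hnxH12 _ ih
  -- every point is periodic
  have hper : ∀ a : E, a ∈ Function.periodicPts nx := by
    intro a
    obtain ⟨i, j, hij, hE⟩ := Finite.exists_ne_map_eq_of_infinite (fun n : ℕ => nx^[n] a)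
    rcases hij.lt_or_gt with h | h
    · have hj : j = i + (j - i) := by omega
      rw [hj, Function.iterate_add_apply] at hE
      have hfix : nx^[j - i] a = a := (hnxInj.iterate i hE.symm)
      exact Function.mem_periodicPts.mpr ⟨j - i, by omega, hfix⟩
    · have hi : i = j + (i - j) := by omega
      rw [hi, Function.iterate_add_apply] at hE
      have hfix : nx^[i - j] a = a := (hnxInj.iterate j hE)
      exact Function.mem_periodicPts.mpr ⟨i - j, by omega, hfix⟩
  have hmpos : ∀ a : E, 0 < Function.minimalPeriod nx a :=
    fun a => Function.minimalPeriod_pos_of_mem_periodicPts (hper a)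
  have hnx2ne : ∀ e, x e = 1/2 → nx (nx e) ≠ e := by
    intro e he h2
    obtain ⟨hf2, hfe, hfv, hfp⟩ := hnxSpec e he
    obtain ⟨he2', hef', hev', hep'⟩ := hnxSpec (nx e) hf2
    rw [h2] at hev'
    have h3 : ve (nx e) ≠ ve e := hveNe e he
    have hJ1 : Joins fst snd e (ve e) (ve (nx e)) :=
      joins_of_incid (hveSpec e he).1 hev' (Ne.symm h3)
    have hJ2 : Joins fst snd (nx e) (ve e) (ve (nx e)) :=
      joins_of_incid hfv (hveSpec (nx e) hf2).1 (Ne.symm h3)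
    exact not_parallel hsimple (Ne.symm hfe) hJ1 hJ2
  have hm3 : ∀ e, x e = 1/2 → 3 ≤ Function.minimalPeriod nx e := by
    intro e he
    have h0 := hmpos e
    have hit := Function.iterate_minimalPeriod (f := nx) (x := e)
    have h1 : Function.minimalPeriod nx e ≠ 1 := by
      intro h
      rw [h] at hit
      exact (hnxSpec e he).2.1 hit
    have h2 : Function.minimalPeriod nx e ≠ 2 := by
      intro h
      rw [h] at hit
      exact hnx2ne e he hit
    omega
  -- orbit equivalence
  set R : E → E → Prop := fun a b => ∃ n : ℕ, nx^[n] a = b with hR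
  have hRrefl : ∀ a, R a a := fun a => ⟨0, rfl⟩
  have hRtrans : ∀ a b c, R a b → R b c → R a c := by
    rintro a b c ⟨n, rfl⟩ ⟨p, rfl⟩
    exact ⟨p + n, Function.iterate_add_apply _ p n a⟩
  have hmult : ∀ (a : E) (q : ℕ), nx^[q] a = a → ∀ k : ℕ, nx^[k * q] a = a := by
    intro a q hq k
    induction k with
    | zero => simp
    | succ k ih =>
      rw [Nat.succ_mul, Function.iterate_add_apply, hq, ih]
  have hRsymm : ∀ a b, R a b → R b a := by
    rintro a b ⟨n, rfl⟩
    obtain ⟨q, hq0, hq⟩ := Function.mem_periodicPts.mp (hper a)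
    refine ⟨n * (q - 1), ?_⟩
    have harith : n * (q - 1) + n = n * q := by
      rcases q with _ | q
      · omega
      · simp only [Nat.add_sub_cancel]
        ring
    calc nx^[n * (q - 1)] (nx^[n] a) = nx^[n * (q - 1) + n] a :=
          (Function.iterate_add_apply _ _ _ _).symm
      _ = nx^[n * q] a := by rw [harith]
      _ = a := hmult a q hq.eq n
  set orb : E → Finset E := fun e => H.filter (fun f => R e f) with horb
  have horbEq : ∀ a b, R a b → orb a = orb b := by
    intro a b hab
    ext f
    simp only [horb, Finset.mem_filter, and_congr_right_iff]
    intro _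
    constructor
    · intro h
      exact hRtrans b a f (hRsymm a b hab) h
    · intro h
      exact hRtrans a b f hab h
  set Orbs : Finset (Finset E) := H.image orb with hOrbs
  set r : ℕ := Orbs.card with hr
  set oeq : {s // s ∈ Orbs} ≃ Fin r := Orbs.equivFin with hoeq
  have hrep0 : ∀ k : Fin r, ∃ e, x e = 1/2 ∧ (oeq.symm k : Finset E) = orb e := by
    intro k
    have hmem : (oeq.symm k : Finset E) ∈ H.image orb := (oeq.symm k).2
    rw [Finset.mem_image] at hmem
    obtain ⟨e, he, heq⟩ := hmem
    exact ⟨e, (hmemH e).mp he, heq.symm⟩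
  set rep : Fin r → E := fun k => (hrep0 k).choose with hrep
  have hrepH : ∀ k, x (rep k) = 1/2 := fun k => (hrep0 k).choose_spec.1
  have hrepOrb : ∀ k, (oeq.symm k : Finset E) = orb (rep k) := fun k => (hrep0 k).choose_spec.2
  set m : Fin r → ℕ := fun k => Function.minimalPeriod nx (rep k) with hm
  have hm3' : ∀ k, 3 ≤ m k := fun k => hm3 _ (hrepH k)
  haveI hNZ : ∀ k, NeZero (m k) := fun k => ⟨by have := hm3' k; omega⟩
  set edg : ∀ k : Fin r, ZMod (m k) → E := fun k i => nx^[i.val] (rep k) with hedg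
  set cyc : ∀ k : Fin r, ZMod (m k) → V := fun k i => ve (edg k (i - 1)) with hcyc
  have hedgH : ∀ k i, x (edg k i) = 1/2 := fun k i => hitH (rep k) (hrepH k) i.val
  have hedg_succ : ∀ k i, edg k (i + 1) = nx (edg k i) := by
    intro k i
    haveI := hNZ k
    haveI : Fact (1 < m k) := ⟨by have := hm3' k; omega⟩
    show nx^[(i + 1).val] (rep k) = nx (nx^[i.val] (rep k))
    rw [ZMod.val_add, ZMod.val_one]
    have h1 : nx^[(i.val + 1) % m k] (rep k) = nx^[i.val + 1] (rep k) :=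
      Function.iterate_mod_minimalPeriod_eq
    rw [h1, Function.iterate_succ_apply']
  have hcancel : ∀ (k : Fin r) (a b : ℕ), a + b < m k →
      nx^[a + b] (rep k) = nx^[a] (rep k) → b = 0 := by
    intro k a b hlt hEq
    by_contra hb
    rw [Function.iterate_add_apply] at hEq
    have hfix : nx^[b] (rep k) = rep k := hnxInj.iterate a hEq
    have hle : Function.minimalPeriod nx (rep k) ≤ b :=
      Function.IsPeriodicPt.minimalPeriod_le (Nat.pos_of_ne_zero hb) hfix
    have hle' : m k ≤ b := hle
    omega
  have hedgInj : ∀ k, Function.Injective (edg k) := by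
    intro k i j hij
    haveI := hNZ k
    have hij' : nx^[i.val] (rep k) = nx^[j.val] (rep k) := hij
    have hi := ZMod.val_lt i
    have hj := ZMod.val_lt j
    rcases le_total i.val j.val with h | h
    · have hj' : j.val = i.val + (j.val - i.val) := by omega
      rw [hj'] at hij'
      have h0 := hcancel k i.val (j.val - i.val) (by omega) hij'.symm
      exact ZMod.val_injective (m k) (by omega)
    · have hi' : i.val = j.val + (i.val - j.val) := by omega
      rw [hi'] at hij'
      have h0 := hcancel k j.val (i.val - j.val) (by omega) hij'
      exact ZMod.val_injective (m k) (by omega)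
  have hdvd3 : ∀ (k : Fin r) (c : ℕ), (c : ZMod (m k)) = 0 → c ≠ 0 → 3 ≤ c := by
    intro k c hc hc0
    have h1 := (ZMod.natCast_eq_zero_iff c (m k)).mp hc
    have h2 := Nat.le_of_dvd (Nat.pos_of_ne_zero hc0) h1
    have := hm3' k
    omega
  have hone : ∀ (k : Fin r) (i : ZMod (m k)), i + 1 ≠ i := by
    intro k i h
    have h1 : ((1 : ℕ) : ZMod (m k)) = 0 := by
      push_cast
      linear_combination h
    have := hdvd3 k 1 h1 one_ne_zero
    omega
  have htwo : ∀ (k : Fin r) (i : ZMod (m k)), i + 2 ≠ i := by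
    intro k i h
    have h1 : ((2 : ℕ) : ZMod (m k)) = 0 := by
      push_cast
      linear_combination h
    have := hdvd3 k 2 h1 two_ne_zero
    omega
  have hcyc_eq : ∀ k i, cyc k (i + 1) = ve (edg k i) := by
    intro k i
    show ve (edg k (i + 1 - 1)) = ve (edg k i)
    rw [add_sub_cancel_right]
  have hcyc1 : ∀ k i, Incid fst snd (edg k i) (cyc k (i + 1)) := by
    intro k i
    rw [hcyc_eq]
    exact (hveSpec _ (hedgH k i)).1
  have hcyc2 : ∀ k i, Incid fst snd (edg k (i + 1)) (cyc k (i + 1)) := by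
    intro k i
    rw [hcyc_eq, hedg_succ]
    exact (hnxSpec _ (hedgH k i)).2.2.1
  have hstep : ∀ k i, edg k i = nx (edg k (i - 1)) := by
    intro k i
    rw [← hedg_succ k (i - 1), sub_add_cancel]
  have hcycNe : ∀ k i, cyc k i ≠ cyc k (i + 1) := by
    intro k i
    show ve (edg k (i - 1)) ≠ ve (edg k (i + 1 - 1))
    rw [add_sub_cancel_right, hstep k i]
    exact Ne.symm (hveNe _ (hedgH k (i - 1)))
  have hJoins : ∀ k i, Joins fst snd (edg k i) (cyc k i) (cyc k (i + 1)) := by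
    intro k i
    refine joins_of_incid ?_ (hcyc1 k i) (hcycNe k i)
    show Incid fst snd (edg k i) (ve (edg k (i - 1)))
    rw [hstep k i]
    exact (hnxSpec _ (hedgH k (i - 1))).2.2.1
  have hPref : ∀ k i, prec (cyc k (i + 1)) (edg k (i + 1)) (edg k i) := by
    intro k i
    rw [hcyc_eq, hedg_succ]
    exact (hnxSpec _ (hedgH k i)).2.2.2
  have hAt : ∀ k i f, x f = 1/2 → Incid fst snd f (cyc k (i + 1)) →
      f = edg k i ∨ f = edg k (i + 1) := by
    intro k i f hf hfv
    by_cases h1 : f = edg k i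
    · exact Or.inl h1
    · right
      refine hOther (cyc k (i + 1)) (edg k i) f (edg k (i + 1)) (hedgH k i) hf
        (hedgH k (i + 1)) (hcyc1 k i) hfv (hcyc2 k i) h1 ?_
      intro hcon
      exact hone k i (hedgInj k hcon)
  have hcycInj' : ∀ k i j, cyc k (i + 1) = cyc k (j + 1) → i = j := by
    intro k i j h
    have h1 := hAt k i (edg k j) (hedgH k j) (by rw [h]; exact hcyc1 k j)
    have h2 := hAt k i (edg k (j + 1)) (hedgH k (j + 1)) (by rw [h]; exact hcyc2 k j)
    rcases h1 with h1 | h1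
    · exact (hedgInj k h1).symm
    · have hj1 : j = i + 1 := hedgInj k h1
      rcases h2 with h2 | h2
      · have hj2 : j + 1 = i := hedgInj k h2
        exfalso
        apply htwo k j
        calc j + 2 = i + 1 := by rw [← hj2]; ring
          _ = j := hj1.symm
      · have hj2 : j = i := add_right_cancel (hedgInj k h2)
        exact absurd (hj1.symm.trans hj2) (hone k i)
  have hcycInj : ∀ k, Function.Injective (cyc k) := by
    intro k i' j' h
    have h' : cyc k ((i' - 1) + 1) = cyc k ((j' - 1) + 1) := by
      rw [sub_add_cancel, sub_add_cancel]
      exact h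
    have := hcycInj' k (i' - 1) (j' - 1) h'
    exact sub_left_inj.mp this
  have horbMem : ∀ k i, edg k i ∈ orb (rep k) := by
    intro k i
    rw [horb]
    exact Finset.mem_filter.mpr ⟨(hmemH _).mpr (hedgH k i), i.val, rfl⟩
  have hrange : ∀ k, Set.range (edg k) = (orb (rep k) : Set E) := by
    intro k
    ext f
    constructor
    · rintro ⟨i, rfl⟩
      exact Finset.mem_coe.mpr (horbMem k i)
    · intro hf
      obtain ⟨hfH, nn, hn⟩ := Finset.mem_filter.mp (Finset.mem_coe.mp hf)
      refine ⟨(nn : ZMod (m k)), ?_⟩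
      show nx^[((nn : ZMod (m k))).val] (rep k) = f
      rw [ZMod.val_natCast]
      have hmod : nx^[nn % m k] (rep k) = nx^[nn] (rep k) :=
        Function.iterate_mod_minimalPeriod_eq
      rw [hmod, hn]
  have hdisj : ∀ k l : Fin r, k ≠ l → ∀ f, f ∈ orb (rep k) → f ∈ orb (rep l) → False := by
    intro k l hkl f hfk hfl
    have h1 : R (rep k) f := (Finset.mem_filter.mp hfk).2
    have h2 : R (rep l) f := (Finset.mem_filter.mp hfl).2
    have h3 : orb (rep k) = orb (rep l) := horbEq _ _ (hRtrans _ _ _ h1 (hRsymm _ _ h2))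
    apply hkl
    have h4 : oeq.symm k = oeq.symm l := Subtype.ext (by rw [hrepOrb k, hrepOrb l, h3])
    exact oeq.symm.injective h4
  have hvdisj : ∀ k l, k ≠ l → ∀ i j, cyc k i ≠ cyc l j := by
    intro k l hkl i j h
    have hinc : Incid fst snd (edg l (j - 1)) (cyc k ((i - 1) + 1)) := by
      rw [sub_add_cancel, h]
      have h2 := hcyc1 l (j - 1)
      rwa [sub_add_cancel] at h2
    rcases hAt k (i - 1) (edg l (j - 1)) (hedgH l (j - 1)) hinc with heq | heq
    · refine hdisj k l hkl (edg l (j - 1)) ?_ (horbMem l (j - 1))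
      rw [heq]
      exact horbMem k (i - 1)
    · refine hdisj k l hkl (edg l (j - 1)) ?_ (horbMem l (j - 1))
      rw [heq]
      exact horbMem k ((i - 1) + 1)
  have hcover : {e | x e = 1/2} = ⋃ k, Set.range (edg k) := by
    ext f
    simp only [Set.mem_setOf_eq, Set.mem_iUnion]
    constructor
    · intro hf
      have hfH : f ∈ H := (hmemH f).mpr hf
      have hOf : orb f ∈ Orbs := Finset.mem_image_of_mem orb hfH
      refine ⟨oeq ⟨orb f, hOf⟩, ?_⟩
      rw [hrange]
      have h1 : orb (rep (oeq ⟨orb f, hOf⟩)) = orb f := by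
        rw [← hrepOrb (oeq ⟨orb f, hOf⟩), Equiv.symm_apply_apply]
      rw [h1]
      exact Finset.mem_coe.mpr (Finset.mem_filter.mpr ⟨hfH, hRrefl f⟩)
    · rintro ⟨k, i, rfl⟩
      exact hedgH k i
  exact ⟨r, m, cyc, edg, fun k => by have := hm3' k; omega, hcycInj, hedgInj, hJoins,
    hvdisj, fun k => Or.inr (hPref k), by rw [hcover]⟩
end

section
/- Let (H, prec), (H', prec') be as in the gadget construction replacing each parallel edge by the 6-cycle gadget with two hanging edges. If x is a point of FSM(H, prec), then the extension x' defined by x'(u u_0) = x'(v v_0) = x(e), x'(u_0 u_1) = x'(v_0 v_2) = 1 - x(e) - x(phi_u(e)), x'(u_0 u_2) = x'(v_0 v_1) = x(phi_u(e)), x'(u_1 v_2) = x(e) + x(phi_u(e)), x'(u_2 v_1) = 1 - x(phi_u(e)) for each gadget (where phi_u(e) is the set of edges dominating e at u), and x'(f) = x(f) for edges without parallels, lies in FSM(H', prec'). -/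
/-!
Away from the gadgets nothing changes: the edges of `H'` at an old vertex `w` are the lifts of
the edges of `H` at `w`, with the same values and the same preferences, so the degree constraint
at `w` and the stability of a non-parallel edge are inherited from `x` (a dominator at `w` lifts
to a dominator at `w`). Inside the gadget of `e`, with `a = x(e)` and `s = x(φ_u(e))`, every
gadget vertex has load exactly `1`, and each of the six inner edges together with its gadget
dominators has value exactly `1`. The hanging edge `uu₀` collects `1 - a - s` from `u₀u₁` and `s`
from the lifts of `φ_u(e)`; the hanging edge `vv₀` collects `s` from `v₀v₁` and `x(φ_v(e))` from
the lifts of `φ_v(e)`, and `a + x(φ_u(e)) + x(φ_v(e)) ≥ 1` is the stability of `e` in `H`.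
Nonnegativity of `1 - a - s` is the degree constraint at `u`, since `e ∉ φ_u(e)`.
-/

attribute [local instance] Classical.propDecidable

/-- `e` is a parallel edge of the multigraph: it is not a loop and some other edge has the
same pair of endpoints. -/
def Par {V E : Type} (fst snd : E → V) (e : E) : Prop :=
  fst e ≠ snd e ∧ ∃ f, f ≠ e ∧
    ((fst f = fst e ∧ snd f = snd e) ∨ (fst f = snd e ∧ snd f = fst e))

/-- Vertices of the graph `H'` obtained from `H` by the Cechlárová–Fleiner gadget: the
old vertices, together with six new vertices `u₀,u₁,u₂,v₀,v₁,v₂` (coded `0,…,5`) for each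
parallel edge. -/
abbrev GV {V E : Type} (fst snd : E → V) : Type :=
  V ⊕ ({e : E // Par fst snd e} × Fin 6)

/-- Edges of `H'`: the non-parallel old edges, together with eight gadget edges
`uu₀, u₀u₁, u₀u₂, vv₀, v₀v₁, v₀v₂, u₁v₂, u₂v₁` (coded `0,…,7`) for each parallel edge. -/
abbrev GE {V E : Type} (fst snd : E → V) : Type :=
  {e : E // ¬ Par fst snd e} ⊕ ({e : E // Par fst snd e} × Fin 8)

/-- First endpoint of an edge of `H'` (with `u = fst e`, `v = snd e`). -/
def gfst {V E : Type} (fst snd : E → V) : GE fst snd → GV fst snd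
  | Sum.inl e => Sum.inl (fst e.1)
  | Sum.inr (e, k) =>
      ![Sum.inl (fst e.1), Sum.inr (e, 0), Sum.inr (e, 0), Sum.inl (snd e.1),
        Sum.inr (e, 3), Sum.inr (e, 3), Sum.inr (e, 1), Sum.inr (e, 2)] k

/-- Second endpoint of an edge of `H'`. -/
def gsnd {V E : Type} (fst snd : E → V) : GE fst snd → GV fst snd
  | Sum.inl e => Sum.inl (snd e.1)
  | Sum.inr (e, k) =>
      ![Sum.inr (e, 0), Sum.inr (e, 1), Sum.inr (e, 2), Sum.inr (e, 3),
        Sum.inr (e, 4), Sum.inr (e, 5), Sum.inr (e, 5), Sum.inr (e, 4)] k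

/-- The old edge of `H` underlying an edge of `H'` (hanging edges of a gadget correspond
to the replaced parallel edge). -/
def gproj {V E : Type} {fst snd : E → V} : GE fst snd → E
  | Sum.inl e => e.1
  | Sum.inr (e, _) => e.1

/-- Preference ranks inside the gadget: `grank i j` is the rank (smaller = more
preferred) of gadget edge `j` at gadget vertex `i`; `9` marks non-incident pairs.
The gadget preferences are: at `u₀`: `u₀u₁ ≺ uu₀ ≺ u₀u₂`; at `u₁`: `u₁v₂ ≺ u₀u₁`;
at `u₂`: `u₀u₂ ≺ u₂v₁`; at `v₀` : `v₀v₁ ≺ vv₀ ≺ v₀v₂`; at `v₁`: `u₂v₁ ≺ v₀v₁`;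
at `v₂`: `v₀v₂ ≺ u₁v₂`. -/
def grank : Fin 6 → Fin 8 → ℕ :=
  ![![1, 0, 2, 9, 9, 9, 9, 9],
    ![9, 1, 9, 9, 9, 9, 0, 9],
    ![9, 9, 0, 9, 9, 9, 9, 1],
    ![9, 9, 9, 1, 0, 2, 9, 9],
    ![9, 9, 9, 9, 1, 9, 9, 0],
    ![9, 9, 9, 9, 9, 0, 1, 9]]

/-- The preference system of `H'`: at an old vertex the preferences are inherited from
`H` (hanging edges `u u₀`, `v v₀` occupying the position of the replaced parallel edge),
at the gadget vertices they are given by `grank`. -/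
def gprec {V E : Type} (fst snd : E → V) (prec : V → E → E → Prop) :
    GV fst snd → GE fst snd → GE fst snd → Prop
  | Sum.inl u, a, b => prec u (gproj a) (gproj b)
  | Sum.inr (e, i), Sum.inr (e₁, j₁), Sum.inr (e₂, j₂) =>
      e₁ = e ∧ e₂ = e ∧ grank i j₁ < grank i j₂
  | _, _, _ => False

/-- The projection `ℝ^{E'} → ℝ^E`: a non-parallel edge keeps its coordinate, a parallel
edge `e` receives the coordinate of the hanging edge `u u₀` of its gadget. -/
noncomputable def projMap {V E : Type} (fst snd : E → V) (x' : GE fst snd → ℝ) : E → ℝ :=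
  fun e =>
    if h : Par fst snd e then x' (Sum.inr (⟨e, h⟩, 0)) else x' (Sum.inl ⟨e, h⟩)

/-- `x(φ_u(e))`: the total `x`-value of the edges dominating `e` at its endpoint
`u = fst e`. -/
noncomputable def phiU {V E : Type} [Fintype V] [Fintype E] (fst snd : E → V)
    (prec : V → E → E → Prop) (x : E → ℝ) (e : E) : ℝ :=
  ∑ f ∈ Finset.univ.filter (fun f => Incid fst snd f (fst e) ∧ prec (fst e) f e), x f

/-- The extension of `x : ℝ^E` to `ℝ^{E'}`: with `a = x(e)` and `s = x(φ_u(e))`, the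
gadget of a parallel edge `e` receives the values `uu₀ = vv₀ = a`,
`u₀u₁ = v₀v₂ = 1 - a - s`, `u₀u₂ = v₀v₁ = s`, `u₁v₂ = a + s`, `u₂v₁ = 1 - s`. -/
noncomputable def mkExt {V E : Type} [Fintype V] [Fintype E] (fst snd : E → V)
    (prec : V → E → E → Prop) (x : E → ℝ) : GE fst snd → ℝ
  | Sum.inl e => x e.1
  | Sum.inr (e, k) =>
      ![x e.1,
        1 - x e.1 - phiU fst snd prec x e.1,
        phiU fst snd prec x e.1,
        x e.1,
        phiU fst snd prec x e.1,
        1 - x e.1 - phiU fst snd prec x e.1,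
        x e.1 + phiU fst snd prec x e.1,
        1 - phiU fst snd prec x e.1] k

section PreferenceSystem

variable {V E : Type} [Fintype E] (fst snd : E → V) (prec : V → E → E → Prop)

noncomputable def incidentEdges (v : V) : Finset E :=
  Finset.univ.filter (fun e => Incid fst snd e v)

noncomputable def dominators (e : E) : Finset E :=
  Finset.univ.filter (fun f => f ≠ e ∧ Dominates fst snd prec f e)

/-- `φ_w(e)`. -/
noncomputable def phiAt (w : V) (e : E) : Finset E :=
  Finset.univ.filter (fun f => Incid fst snd f w ∧ prec w f e)

theorem dominators_subset_phiAt_union (e : E) :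
    dominators fst snd prec e ⊆ phiAt fst snd prec (fst e) e ∪ phiAt fst snd prec (snd e) e := by
  intro f hf
  obtain ⟨-, -, w, hew, hfw, hp⟩ := Finset.mem_filter.1 hf
  rcases hew with rfl | rfl
  · exact Finset.mem_union_left _ (Finset.mem_filter.2 ⟨Finset.mem_univ _, hfw, hp⟩)
  · exact Finset.mem_union_right _ (Finset.mem_filter.2 ⟨Finset.mem_univ _, hfw, hp⟩)

variable {fst snd prec}

theorem mem_FSMset_iff [Fintype V] {x : E → ℝ} :
    x ∈ FSMset fst snd prec ↔ (∀ e, 0 ≤ x e) ∧ (∀ v, ∑ e ∈ incidentEdges fst snd v, x e ≤ 1) ∧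
      ∀ e, 1 ≤ x e + ∑ f ∈ dominators fst snd prec e, x f :=
  Iff.rfl

theorem phiU_eq_sum_phiAt [Fintype V] (x : E → ℝ) (e : E) :
    phiU fst snd prec x e = ∑ f ∈ phiAt fst snd prec (fst e) e, x f :=
  rfl

theorem add_phiU_le_one [Fintype V] (hirr : ∀ v e, ¬ prec v e e) {x : E → ℝ}
    (hx : x ∈ FSMset fst snd prec) (e : E) : x e + phiU fst snd prec x e ≤ 1 := by
  have hnotin : e ∉ phiAt fst snd prec (fst e) e := fun he =>
    hirr _ _ (Finset.mem_filter.1 he).2.2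
  have hsub : insert e (phiAt fst snd prec (fst e) e) ⊆ incidentEdges fst snd (fst e) := by
    intro f hf
    rcases Finset.mem_insert.1 hf with rfl | hf
    · exact Finset.mem_filter.2 ⟨Finset.mem_univ _, Or.inl rfl⟩
    · exact Finset.mem_filter.2 ⟨Finset.mem_univ _, (Finset.mem_filter.1 hf).2.1⟩
  calc x e + phiU fst snd prec x e = ∑ f ∈ insert e (phiAt fst snd prec (fst e) e), x f := by
        rw [Finset.sum_insert hnotin, phiU_eq_sum_phiAt]
    _ ≤ ∑ f ∈ incidentEdges fst snd (fst e), x f :=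
        Finset.sum_le_sum_of_subset_of_nonneg hsub fun f _ _ => hx.1 f
    _ ≤ 1 := hx.2.1 _

theorem one_le_add_sum_phiAt_add_sum_phiAt [Fintype V] {x : E → ℝ}
    (hx : x ∈ FSMset fst snd prec) (e : E) :
    1 ≤ x e + ∑ f ∈ phiAt fst snd prec (fst e) e, x f +
      ∑ f ∈ phiAt fst snd prec (snd e) e, x f := by
  have hinter : 0 ≤ ∑ f ∈ phiAt fst snd prec (fst e) e ∩ phiAt fst snd prec (snd e) e, x f :=
    Finset.sum_nonneg fun f _ => hx.1 f
  have hunion := Finset.sum_le_sum_of_subset_of_nonneg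
    (dominators_subset_phiAt_union fst snd prec e) fun f _ _ => hx.1 f
  have hsplit := Finset.sum_union_inter (f := x) (s₁ := phiAt fst snd prec (fst e) e)
    (s₂ := phiAt fst snd prec (snd e) e)
  linarith [(mem_FSMset_iff.1 hx).2.2 e]

theorem one_le_add_sum_dominators_of_subset {x : E → ℝ} (hx : ∀ e, 0 ≤ x e) {e : E}
    {S : Finset E} (hS : S ⊆ dominators fst snd prec e) (h : 1 ≤ x e + ∑ f ∈ S, x f) :
    1 ≤ x e + ∑ f ∈ dominators fst snd prec e, x f :=
  h.trans (add_le_add_right (Finset.sum_le_sum_of_subset_of_nonneg hS fun f _ _ => hx f) _)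

end PreferenceSystem

section Gadget

variable {V E : Type} {fst snd : E → V}

theorem incid_inl_inl_iff (f : {e : E // ¬ Par fst snd e}) (w : V) :
    Incid (gfst fst snd) (gsnd fst snd) (Sum.inl f) (Sum.inl w) ↔ Incid fst snd f.1 w := by
  simp [Incid, gfst, gsnd]

theorem not_incid_inl_inr (f : {e : E // ¬ Par fst snd e}) (p : {e : E // Par fst snd e} × Fin 6) :
    ¬ Incid (gfst fst snd) (gsnd fst snd) (Sum.inl f) (Sum.inr p) := by
  simp [Incid, gfst, gsnd]

theorem incid_inr_inl_iff (f : {e : E // Par fst snd e}) (k : Fin 8) (w : V) :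
    Incid (gfst fst snd) (gsnd fst snd) (Sum.inr (f, k)) (Sum.inl w) ↔
      k = 0 ∧ fst f.1 = w ∨ k = 3 ∧ snd f.1 = w := by
  fin_cases k <;> simp [Incid, gfst, gsnd]

theorem incid_inr_inr_iff (a : GE fst snd) (f : {e : E // Par fst snd e}) (i : Fin 6) :
    Incid (gfst fst snd) (gsnd fst snd) a (Sum.inr (f, i)) ↔
      ∃ j, grank i j < 9 ∧ a = Sum.inr (f, j) := by
  rcases a with g | ⟨g, k⟩
  · simp [Incid, gfst, gsnd]
  · fin_cases i <;> fin_cases k <;> simp [Incid, gfst, gsnd, grank, eq_comm]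

/-- The edge of `H'` standing at the old vertex `w` for the edge `g` of `H`: for a parallel
`g`, the hanging edge of its gadget on the side of `w`. -/
noncomputable def liftAt (fst snd : E → V) (w : V) (g : E) : GE fst snd :=
  if h : Par fst snd g then
    if fst g = w then Sum.inr (⟨g, h⟩, 0) else Sum.inr (⟨g, h⟩, 3)
  else Sum.inl ⟨g, h⟩

theorem gproj_liftAt (w : V) (g : E) : gproj (liftAt fst snd w g) = g := by
  unfold liftAt; split_ifs <;> rfl

theorem liftAt_injective (w : V) : Function.Injective (liftAt fst snd w) :=
  Function.LeftInverse.injective (gproj_liftAt w)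

theorem incid_liftAt {w : V} {g : E} (hg : Incid fst snd g w) :
    Incid (gfst fst snd) (gsnd fst snd) (liftAt fst snd w g) (Sum.inl w) := by
  unfold liftAt
  split_ifs with hpar hfst
  · exact (incid_inr_inl_iff _ _ _).2 (Or.inl ⟨rfl, hfst⟩)
  · exact (incid_inr_inl_iff _ _ _).2 (Or.inr ⟨rfl, hg.resolve_left hfst⟩)
  · exact (incid_inl_inl_iff _ _).2 hg

theorem liftAt_gproj {w : V} {a : GE fst snd}
    (ha : Incid (gfst fst snd) (gsnd fst snd) a (Sum.inl w)) : liftAt fst snd w (gproj a) = a := by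
  rcases a with g | ⟨g, k⟩
  · exact dif_neg g.2
  · rcases (incid_inr_inl_iff g k w).1 ha with ⟨rfl, hu⟩ | ⟨rfl, hv⟩
    · exact (dif_pos g.2).trans (if_pos hu)
    -- a parallel edge is not a loop, so only one of its hanging edges meets `w`
    · exact (dif_pos g.2).trans (if_neg fun hu => g.2.1 (hu.trans hv.symm))

theorem incid_gproj {w : V} {a : GE fst snd}
    (ha : Incid (gfst fst snd) (gsnd fst snd) a (Sum.inl w)) : Incid fst snd (gproj a) w := by
  rcases a with g | ⟨g, k⟩
  · exact (incid_inl_inl_iff g w).1 ha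
  · rcases (incid_inr_inl_iff g k w).1 ha with ⟨-, hu⟩ | ⟨-, hv⟩
    · exact Or.inl hu
    · exact Or.inr hv

theorem gadgetEdge_injective (f : {e : E // Par fst snd e}) :
    Function.Injective fun j : Fin 8 => (Sum.inr (f, j) : GE fst snd) :=
  fun _ _ h => (Prod.mk.inj (Sum.inr.inj h)).2

variable [Fintype E]

theorem incidentEdges_inl_eq_image [Fintype V] (w : V) :
    incidentEdges (gfst fst snd) (gsnd fst snd) (Sum.inl w) =
      (incidentEdges fst snd w).image (liftAt fst snd w) := by
  ext a
  simp only [incidentEdges, Finset.mem_filter, Finset.mem_univ, true_and, Finset.mem_image]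
  exact ⟨fun ha => ⟨gproj a, incid_gproj ha, liftAt_gproj ha⟩,
    fun ⟨g, hg, hga⟩ => hga ▸ incid_liftAt hg⟩

theorem incidentEdges_inr_eq_image (f : {e : E // Par fst snd e}) (i : Fin 6) :
    incidentEdges (gfst fst snd) (gsnd fst snd) (Sum.inr (f, i)) =
      (Finset.univ.filter fun j => grank i j < 9).image fun j => Sum.inr (f, j) := by
  ext a
  simp only [incidentEdges, Finset.mem_filter, Finset.mem_univ, true_and, Finset.mem_image,
    incid_inr_inr_iff, eq_comm]

variable {prec : V → E → E → Prop}

theorem liftAt_mem_dominators (hirr : ∀ v e, ¬ prec v e e) {w : V} {a : GE fst snd} {g : E}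
    (ha : Incid (gfst fst snd) (gsnd fst snd) a (Sum.inl w))
    (hg : g ∈ phiAt fst snd prec w (gproj a)) :
    liftAt fst snd w g ∈ dominators (gfst fst snd) (gsnd fst snd) (gprec fst snd prec) a := by
  obtain ⟨-, hgw, hpref⟩ := Finset.mem_filter.1 hg
  simp only [dominators, Finset.mem_filter, Finset.mem_univ, true_and]
  refine ⟨fun h => ?_, Sum.inl w, ha, incid_liftAt hgw, ?_⟩
  · rw [← h, gproj_liftAt] at hpref
    exact hirr _ _ hpref
  · show prec w (gproj (liftAt fst snd w g)) (gproj a)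
    rwa [gproj_liftAt]

theorem gadget_mem_dominators {f : {e : E // Par fst snd e}} {i : Fin 6} {j k : Fin 8}
    (hjk : grank i j < grank i k) (hk : grank i k < 9) :
    (Sum.inr (f, j) : GE fst snd) ∈
      dominators (gfst fst snd) (gsnd fst snd) (gprec fst snd prec) (Sum.inr (f, k)) := by
  simp only [dominators, Finset.mem_filter, Finset.mem_univ, true_and]
  exact ⟨
    fun h => hjk.ne (congrArg (grank i) (gadgetEdge_injective f h)),
    Sum.inr (f, i), (incid_inr_inr_iff _ f i).2 ⟨k, hk, rfl⟩,
    (incid_inr_inr_iff _ f i).2 ⟨j, hjk.trans hk, rfl⟩, rfl, rfl, hjk⟩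

variable [Fintype V] {x : E → ℝ}

theorem mkExt_liftAt (w : V) (g : E) : mkExt fst snd prec x (liftAt fst snd w g) = x g := by
  unfold liftAt; split_ifs <;> rfl

theorem mkExt_eq_of_incid_inl {w : V} {a : GE fst snd}
    (ha : Incid (gfst fst snd) (gsnd fst snd) a (Sum.inl w)) :
    mkExt fst snd prec x a = x (gproj a) :=
  (congrArg _ (liftAt_gproj ha)).symm.trans (mkExt_liftAt w _)

theorem sum_mkExt_image_liftAt (w : V) (S : Finset E) :
    ∑ a ∈ S.image (liftAt fst snd w), mkExt fst snd prec x a = ∑ g ∈ S, x g := by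
  rw [Finset.sum_image (liftAt_injective w).injOn]
  exact Finset.sum_congr rfl fun g _ => mkExt_liftAt w g

theorem sum_incidentEdges_inl_mkExt (w : V) :
    ∑ a ∈ incidentEdges (gfst fst snd) (gsnd fst snd) (Sum.inl w), mkExt fst snd prec x a =
      ∑ g ∈ incidentEdges fst snd w, x g := by
  rw [incidentEdges_inl_eq_image, sum_mkExt_image_liftAt]

theorem sum_incidentEdges_inr_mkExt (f : {e : E // Par fst snd e}) (i : Fin 6) :
    ∑ a ∈ incidentEdges (gfst fst snd) (gsnd fst snd) (Sum.inr (f, i)), mkExt fst snd prec x a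
      = 1 := by
  rw [incidentEdges_inr_eq_image, Finset.sum_image (gadgetEdge_injective f).injOn,
    Finset.sum_filter, Fin.sum_univ_eight]
  fin_cases i <;>
  · simp only [Fin.zero_eta, Fin.mk_one, Fin.reduceFinMk, grank, mkExt, Matrix.cons_val,
      Nat.reduceLT, ↓reduceIte]
    ring

theorem mkExt_nonneg (hirr : ∀ v e, ¬ prec v e e) (hx : x ∈ FSMset fst snd prec)
    (a : GE fst snd) : 0 ≤ mkExt fst snd prec x a := by
  rcases a with f | ⟨f, k⟩
  · exact hx.1 f.1
  · have ha := hx.1 f.1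
    have hs : 0 ≤ phiU fst snd prec x f.1 := Finset.sum_nonneg fun g _ => hx.1 g
    have has := add_phiU_le_one hirr hx f.1
    fin_cases k <;> simp [mkExt] <;> linarith

theorem one_le_mkExt_add_sum_dominators_of_hanging (hirr : ∀ v e, ¬ prec v e e)
    (hx0 : ∀ a, 0 ≤ mkExt fst snd prec x a) {w : V} {a b : GE fst snd}
    (ha : Incid (gfst fst snd) (gsnd fst snd) a (Sum.inl w))
    (hb : b ∈ dominators (gfst fst snd) (gsnd fst snd) (gprec fst snd prec) a)
    (hbw : ¬ Incid (gfst fst snd) (gsnd fst snd) b (Sum.inl w))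
    (h : 1 ≤ mkExt fst snd prec x a + mkExt fst snd prec x b +
      ∑ g ∈ phiAt fst snd prec w (gproj a), x g) :
    1 ≤ mkExt fst snd prec x a + ∑ c ∈ dominators (gfst fst snd) (gsnd fst snd)
      (gprec fst snd prec) a, mkExt fst snd prec x c := by
  have hnotin : b ∉ (phiAt fst snd prec w (gproj a)).image (liftAt fst snd w) := by
    intro hb'
    obtain ⟨g, hg, rfl⟩ := Finset.mem_image.1 hb'
    exact hbw (incid_liftAt (Finset.mem_filter.1 hg).2.1)
  refine one_le_add_sum_dominators_of_subset hx0
    (S := insert b ((phiAt fst snd prec w (gproj a)).image (liftAt fst snd w)))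
    (Finset.insert_subset hb ?_) ?_
  · intro c hc
    obtain ⟨g, hg, rfl⟩ := Finset.mem_image.1 hc
    exact liftAt_mem_dominators hirr ha hg
  · rw [Finset.sum_insert hnotin, sum_mkExt_image_liftAt]
    linarith

theorem one_le_mkExt_add_sum_dominators_of_gadget (hx0 : ∀ a, 0 ≤ mkExt fst snd prec x a)
    (f : {e : E // Par fst snd e}) {k : Fin 8} (J : Finset (Fin 8))
    (hJ : ∀ j ∈ J, ∃ i, grank i j < grank i k ∧ grank i k < 9)
    (h : mkExt fst snd prec x (Sum.inr (f, k)) +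
      ∑ j ∈ J, mkExt fst snd prec x (Sum.inr (f, j)) = 1) :
    1 ≤ mkExt fst snd prec x (Sum.inr (f, k)) + ∑ c ∈ dominators (gfst fst snd) (gsnd fst snd)
      (gprec fst snd prec) (Sum.inr (f, k)), mkExt fst snd prec x c := by
  refine one_le_add_sum_dominators_of_subset hx0 (S := J.image fun j => Sum.inr (f, j)) ?_ ?_
  · intro c hc
    obtain ⟨j, hj, rfl⟩ := Finset.mem_image.1 hc
    obtain ⟨i, hjk, hk⟩ := hJ j hj
    exact gadget_mem_dominators hjk hk
  · rw [Finset.sum_image (gadgetEdge_injective f).injOn, h]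

theorem one_le_mkExt_add_sum_dominators_inl (hirr : ∀ v e, ¬ prec v e e)
    (hx : x ∈ FSMset fst snd prec) (f : {e : E // ¬ Par fst snd e}) :
    1 ≤ mkExt fst snd prec x (Sum.inl f) + ∑ c ∈ dominators (gfst fst snd) (gsnd fst snd)
      (gprec fst snd prec) (Sum.inl f), mkExt fst snd prec x c := by
  set D' := dominators (gfst fst snd) (gsnd fst snd) (gprec fst snd prec) (Sum.inl f)
  have hsub : dominators fst snd prec f.1 ⊆ D'.image gproj := by
    intro g hg
    obtain ⟨-, -, w, hfw, hgw, hpref⟩ := Finset.mem_filter.1 hg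
    exact Finset.mem_image.2 ⟨liftAt fst snd w g,
      liftAt_mem_dominators hirr ((incid_inl_inl_iff f w).2 hfw)
        (Finset.mem_filter.2 ⟨Finset.mem_univ _, hgw, hpref⟩),
      gproj_liftAt w g⟩
  have hval : ∀ c ∈ D', mkExt fst snd prec x c = x (gproj c) := by
    intro c hc
    simp only [D', dominators, Finset.mem_filter] at hc
    obtain ⟨-, -, p, hfp, hcp, -⟩ := hc
    rcases p with w | p
    · exact mkExt_eq_of_incid_inl hcp
    · exact absurd hfp (not_incid_inl_inr f p)
  calc 1 ≤ x f.1 + ∑ g ∈ dominators fst snd prec f.1, x g := (mem_FSMset_iff.1 hx).2.2 f.1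
    _ ≤ x f.1 + ∑ g ∈ D'.image gproj, x g :=
      add_le_add_right (Finset.sum_le_sum_of_subset_of_nonneg hsub fun g _ _ => hx.1 g) _
    _ ≤ x f.1 + ∑ c ∈ D', x (gproj c) :=
      add_le_add_right (Finset.sum_image_le_of_nonneg fun g _ => hx.1 g) _
    _ = mkExt fst snd prec x (Sum.inl f) + ∑ c ∈ D', mkExt fst snd prec x c := by
      rw [Finset.sum_congr rfl hval]
      rfl

theorem one_le_mkExt_add_sum_dominators_inr (hirr : ∀ v e, ¬ prec v e e)
    (hx : x ∈ FSMset fst snd prec) (f : {e : E // Par fst snd e}) (k : Fin 8) :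
    1 ≤ mkExt fst snd prec x (Sum.inr (f, k)) + ∑ c ∈ dominators (gfst fst snd) (gsnd fst snd)
      (gprec fst snd prec) (Sum.inr (f, k)), mkExt fst snd prec x c := by
  have hx0 := mkExt_nonneg hirr hx
  have hstab := one_le_add_sum_phiAt_add_sum_phiAt hx f.1
  fin_cases k <;> simp only [Fin.zero_eta, Fin.mk_one, Fin.reduceFinMk]
  · exact one_le_mkExt_add_sum_dominators_of_hanging hirr hx0 (b := Sum.inr (f, 1))
      ((incid_inr_inl_iff f 0 _).2 (Or.inl ⟨rfl, rfl⟩))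
      (gadget_mem_dominators (i := 0) (by decide) (by decide)) (by simp [incid_inr_inl_iff])
      (by simp only [mkExt, Matrix.cons_val, gproj, phiU_eq_sum_phiAt]; linarith)
  · exact one_le_mkExt_add_sum_dominators_of_gadget hx0 f {6} (by decide)
      (by simp only [mkExt, Matrix.cons_val, Finset.sum_singleton]; ring)
  · exact one_le_mkExt_add_sum_dominators_of_gadget hx0 f {0, 1} (by decide)
      (by rw [Finset.sum_pair (by decide)]; simp only [mkExt, Matrix.cons_val]; ring)
  · exact one_le_mkExt_add_sum_dominators_of_hanging hirr hx0 (b := Sum.inr (f, 4))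
      ((incid_inr_inl_iff f 3 _).2 (Or.inr ⟨rfl, rfl⟩))
      (gadget_mem_dominators (i := 3) (by decide) (by decide)) (by simp [incid_inr_inl_iff])
      (by simp only [mkExt, Matrix.cons_val, gproj, phiU_eq_sum_phiAt]; linarith)
  · exact one_le_mkExt_add_sum_dominators_of_gadget hx0 f {7} (by decide)
      (by simp only [mkExt, Matrix.cons_val, Finset.sum_singleton]; ring)
  · exact one_le_mkExt_add_sum_dominators_of_gadget hx0 f {3, 4} (by decide)
      (by rw [Finset.sum_pair (by decide)]; simp only [mkExt, Matrix.cons_val]; ring)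
  · exact one_le_mkExt_add_sum_dominators_of_gadget hx0 f {5} (by decide)
      (by simp only [mkExt, Matrix.cons_val, Finset.sum_singleton]; ring)
  · exact one_le_mkExt_add_sum_dominators_of_gadget hx0 f {2} (by decide)
      (by simp only [mkExt, Matrix.cons_val, Finset.sum_singleton]; ring)

end Gadget

/-- if `x ∈ FSM(H, prec)`, then its extension `mkExt` lies in
`FSM(H', prec')` of the gadget construction. -/
theorem stmt_13 {V E : Type} [Fintype V] [Fintype E] (fst snd : E → V)
    (prec : V → E → E → Prop) (hord : IsPrefOrder fst snd prec)
    (x : E → ℝ) (hx : x ∈ FSMset fst snd prec) :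
    mkExt fst snd prec x ∈
      FSMset (gfst fst snd) (gsnd fst snd) (gprec fst snd prec) := by
  have hirr := hord.1
  refine mem_FSMset_iff.2 ⟨mkExt_nonneg hirr hx, ?_, ?_⟩
  · rintro (w | ⟨f, i⟩)
    · rw [sum_incidentEdges_inl_mkExt]
      exact (mem_FSMset_iff.1 hx).2.1 w
    · exact (sum_incidentEdges_inr_mkExt f i).le
  · rintro (f | ⟨f, k⟩)
    · exact one_le_mkExt_add_sum_dominators_inl hirr hx f
    · exact one_le_mkExt_add_sum_dominators_inr hirr hx f k
end
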